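/- Let 1 < p₀ < p < p₀/(p₀−1), set r = p₀'/p = p₀/(p(p₀−1)) and s = p/p₀. Let u and ν be weights on 𝔻 such that u ∈ A_s⁺(𝔻) ∩ RH_{r'}(𝔻) and ν^r ∈ A₂⁺(𝔻). Then uν ∈ A_p⁺(𝔻) and [uν]_{A_p⁺} ≤ [u]_{A_s⁺} · [u]_{RH_{r'}} · [ν^r]_{A₂⁺}^{1/r}. -/

import Mathlib

noncomputable section

open MeasureTheory Filter Set
open scoped ENNReal

/-- Normalized planar Lebesgue measure `dA = dxdy/π` restricted to a set. -/
def normArea (E : Set ℂ) : Measure ℂ :=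
  ENNReal.ofReal Real.pi⁻¹ • volume.restrict E

/-- Normalized area measure on the unit disc. -/
def discMeasure : Measure ℂ := normArea (Metric.ball 0 1)

/-- Average of a nonnegative quantity over a set, in `ℝ≥0∞`. -/
def eAvg (μ : Measure ℂ) (I : Set ℂ) (w : ℂ → ℝ) : ℝ≥0∞ :=
  (∫⁻ z in I, ENNReal.ofReal (w z) ∂μ) / μ I

/-- The Békollè–Bonami `A_p⁺` characteristic of a weight on the unit disc: the supremum
over Carleson regions `D_r(z) ∩ 𝔻`, `z ∈ ∂𝔻`, `r > 0`, of
`(⨍ w dA)(⨍ w^{-1/(p-1)} dA)^{p-1}`. -/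
def ApPlusDisc (p : ℝ) (w : ℂ → ℝ) : ℝ≥0∞ :=
  ⨆ (z : ℂ) (_ : z ∈ Metric.sphere (0 : ℂ) 1) (r : ℝ) (_ : 0 < r),
    eAvg discMeasure (Metric.ball z r) w *
      (eAvg discMeasure (Metric.ball z r) fun x => w x ^ (-1 / (p - 1))) ^ (p - 1)

/-- The reverse Hölder `RH_q` characteristic of a weight on the unit disc
(over Carleson regions). -/
def RHDisc (q : ℝ) (w : ℂ → ℝ) : ℝ≥0∞ :=
  ⨆ (z : ℂ) (_ : z ∈ Metric.sphere (0 : ℂ) 1) (r : ℝ) (_ : 0 < r),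
    (eAvg discMeasure (Metric.ball z r) fun x => w x ^ q) ^ (1 / q) /
      eAvg discMeasure (Metric.ball z r) w

/-- A weight: measurable and positive almost everywhere. -/
def IsWeightOn (μ : Measure ℂ) (w : ℂ → ℝ) : Prop :=
  Measurable w ∧ ∀ᵐ z ∂μ, 0 < w z

/-!
On a Carleson region `B`, average against the normalized measure `dA|_B / A(B)`. Hölder with
exponents `r', r` bounds `⨍ uν` by `(⨍ u^{r'})^{1/r'} (⨍ ν^r)^{1/r}`, and Hölder with exponents
`(p-1)/(s-1)` and `r(p-1)` (conjugate because `p = s + 1/r`) bounds `(⨍ (uν)^{-1/(p-1)})^{p-1}`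
by `(⨍ u^{-1/(s-1)})^{s-1} (⨍ ν^{-r})^{1/r}`. The reverse Hölder inequality replaces
`(⨍ u^{r'})^{1/r'}` by `[u]_{RH_{r'}} ⨍ u`, and what remains is the `A_s⁺` quantity of `u` times
the `1/r`-th power of the `A₂⁺` quantity of `ν^r`.
-/

section Holder

variable {α : Type*} [MeasurableSpace α] {μ : Measure α}

lemma lintegral_ofReal_ne_zero (hμ : μ ≠ 0) {w : α → ℝ} (hw : AEMeasurable w μ)
    (hpos : ∀ᵐ x ∂μ, 0 < w x) : ∫⁻ x, ENNReal.ofReal (w x) ∂μ ≠ 0 := by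
  rw [Ne, lintegral_eq_zero_iff' hw.ennreal_ofReal]
  intro hzero
  refine hμ (ae_eq_bot.mp (eventually_false_iff_eq_bot.mp ?_))
  filter_upwards [hpos, hzero] with x hx hx0
  simp only [Pi.zero_apply, ENNReal.ofReal_eq_zero] at hx0
  linarith

lemma lintegral_ofReal_mul_rpow_le {p q : ℝ} (hpq : p.HolderConjugate q) (t : ℝ) {f g : α → ℝ}
    (hf : AEMeasurable f μ) (hg : AEMeasurable g μ) (hf0 : ∀ᵐ x ∂μ, 0 ≤ f x)
    (hg0 : ∀ᵐ x ∂μ, 0 ≤ g x) :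
    ∫⁻ x, ENNReal.ofReal ((f x * g x) ^ t) ∂μ ≤
      (∫⁻ x, ENNReal.ofReal (f x ^ (t * p)) ∂μ) ^ (1 / p) *
        (∫⁻ x, ENNReal.ofReal (g x ^ (t * q)) ∂μ) ^ (1 / q) := by
  have holder := ENNReal.lintegral_mul_le_Lp_mul_Lq μ hpq
    (hf.pow_const t).ennreal_ofReal (hg.pow_const t).ennreal_ofReal
  have hsplit : ∀ᵐ x ∂μ, ENNReal.ofReal ((f x * g x) ^ t) =
      ENNReal.ofReal (f x ^ t) * ENNReal.ofReal (g x ^ t) := by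
    filter_upwards [hf0, hg0] with x hfx hgx
    rw [Real.mul_rpow hfx hgx, ENNReal.ofReal_mul (Real.rpow_nonneg hfx t)]
  have hpow {h : α → ℝ} (h0 : ∀ᵐ x ∂μ, 0 ≤ h x) {e : ℝ} (he : 0 ≤ e) :
      ∀ᵐ x ∂μ, ENNReal.ofReal (h x ^ t) ^ e = ENNReal.ofReal (h x ^ (t * e)) := by
    filter_upwards [h0] with x hx
    rw [ENNReal.ofReal_rpow_of_nonneg (Real.rpow_nonneg hx t) he, Real.rpow_mul hx]
  rw [lintegral_congr_ae hsplit, ← lintegral_congr_ae (hpow hf0 hpq.nonneg),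
    ← lintegral_congr_ae (hpow hg0 hpq.symm.nonneg)]
  exact holder

theorem lintegral_product_weight_le {s r p : ℝ} (hs : 1 < s) (hr : 1 < r) (hp : s + 1 / r = p)
    {u v : α → ℝ} (hu : AEMeasurable u μ) (hv : AEMeasurable v μ) (hu0 : ∀ᵐ x ∂μ, 0 ≤ u x)
    (hv0 : ∀ᵐ x ∂μ, 0 ≤ v x) :
    (∫⁻ x, ENNReal.ofReal (u x * v x) ∂μ) *
        (∫⁻ x, ENNReal.ofReal ((u x * v x) ^ (-1 / (p - 1))) ∂μ) ^ (p - 1) ≤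
      (∫⁻ x, ENNReal.ofReal (u x ^ (r / (r - 1))) ∂μ) ^ (1 / (r / (r - 1))) *
        (∫⁻ x, ENNReal.ofReal (u x ^ (-1 / (s - 1))) ∂μ) ^ (s - 1) *
        ((∫⁻ x, ENNReal.ofReal (v x ^ r) ∂μ) * ∫⁻ x, ENNReal.ofReal (v x ^ (-r)) ∂μ) ^ (1 / r) := by
  have hs1 : 0 < s - 1 := by linarith
  have hp1 : 0 < p - 1 := by
    have : 0 < 1 / r := by positivity
    linarith
  have hconj₁ : (r / (r - 1)).HolderConjugate r := (Real.HolderConjugate.conjExponent hr).symm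
  have hconj₂ : ((p - 1) / (s - 1)).HolderConjugate (r * (p - 1)) := by
    refine ⟨?_, div_pos hp1 hs1, mul_pos (by linarith) hp1⟩
    have hr0 : r ≠ 0 := by positivity
    field_simp
    rw [← hp]
    field_simp
    ring
  have H₁ := lintegral_ofReal_mul_rpow_le hconj₁ 1 hu hv hu0 hv0
  have H₂ := lintegral_ofReal_mul_rpow_le hconj₂ (-1 / (p - 1)) hu hv hu0 hv0
  simp only [Real.rpow_one, one_mul] at H₁
  rw [show -1 / (p - 1) * ((p - 1) / (s - 1)) = -1 / (s - 1) by field_simp,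
    show -1 / (p - 1) * (r * (p - 1)) = -r by field_simp] at H₂
  calc _ ≤ _ := mul_le_mul' H₁ (ENNReal.rpow_le_rpow H₂ hp1.le)
    _ = _ := by
      rw [ENNReal.mul_rpow_of_nonneg _ _ hp1.le, ← ENNReal.rpow_mul, ← ENNReal.rpow_mul,
        show 1 / ((p - 1) / (s - 1)) * (p - 1) = s - 1 by field_simp,
        show 1 / (r * (p - 1)) * (p - 1) = 1 / r by field_simp,
        ENNReal.mul_rpow_of_nonneg _ _ (by positivity)]
      ring

end Holder

instance : IsFiniteMeasure discMeasure := by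
  constructor
  simp only [discMeasure, normArea, Measure.smul_apply, Measure.restrict_apply_univ, smul_eq_mul]
  exact ENNReal.mul_lt_top ENNReal.ofReal_lt_top measure_ball_lt_top

lemma discMeasure_ball_ne_zero {z : ℂ} (hz : z ∈ Metric.closedBall (0 : ℂ) 1) {ρ : ℝ}
    (hρ : 0 < ρ) : discMeasure (Metric.ball z ρ) ≠ 0 := by
  rw [← closure_ball (0 : ℂ) one_ne_zero] at hz
  obtain ⟨w, hw, hzw⟩ := Metric.mem_closure_iff.mp hz ρ hρ
  have hne : (Metric.ball z ρ ∩ Metric.ball 0 1).Nonempty := ⟨w, Metric.mem_ball'.mpr hzw, hw⟩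
  simp only [discMeasure, normArea, Measure.smul_apply, smul_eq_mul,
    Measure.restrict_apply measurableSet_ball]
  exact mul_ne_zero (by simp [Real.pi_pos])
    ((Metric.isOpen_ball.inter Metric.isOpen_ball).measure_ne_zero volume hne)

lemma IsWeightOn.mono_ac {μ ν : Measure ℂ} {w : ℂ → ℝ} (hw : IsWeightOn μ w) (hνμ : ν ≪ μ) :
    IsWeightOn ν w :=
  ⟨hw.1, hνμ.ae_le hw.2⟩

lemma eAvg_eq_lintegral (μ : Measure ℂ) (I : Set ℂ) (w : ℂ → ℝ) :
    eAvg μ I w = ∫⁻ z, ENNReal.ofReal (w z) ∂((μ I)⁻¹ • μ.restrict I) := by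
  rw [eAvg, lintegral_smul_measure, ENNReal.div_eq_inv_mul, smul_eq_mul]

lemma le_ApPlusDisc (q : ℝ) (w : ℂ → ℝ) {z : ℂ} (hz : z ∈ Metric.sphere (0 : ℂ) 1)
    {ρ : ℝ} (hρ : 0 < ρ) :
    eAvg discMeasure (Metric.ball z ρ) w *
      (eAvg discMeasure (Metric.ball z ρ) fun x => w x ^ (-1 / (q - 1))) ^ (q - 1) ≤
      ApPlusDisc q w :=
  le_iSup₂_of_le z hz (le_iSup₂_of_le ρ hρ le_rfl)

lemma le_RHDisc (q : ℝ) (w : ℂ → ℝ) {z : ℂ} (hz : z ∈ Metric.sphere (0 : ℂ) 1)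
    {ρ : ℝ} (hρ : 0 < ρ) :
    (eAvg discMeasure (Metric.ball z ρ) fun x => w x ^ q) ^ (1 / q) /
      eAvg discMeasure (Metric.ball z ρ) w ≤ RHDisc q w :=
  le_iSup₂_of_le z hz (le_iSup₂_of_le ρ hρ le_rfl)

theorem ApPlusDisc_product_weight_le {s r p : ℝ} (hs : 1 < s) (hr : 1 < r) (hp : s + 1 / r = p)
    {u ν : ℂ → ℝ} (hu : IsWeightOn discMeasure u) (hν : IsWeightOn discMeasure ν)
    (huAs : ApPlusDisc s u ≠ ⊤) :
    ApPlusDisc p (fun z => u z * ν z) ≤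
      ApPlusDisc s u * RHDisc (r / (r - 1)) u * ApPlusDisc 2 (fun z => ν z ^ r) ^ (1 / r) := by
  refine iSup₂_le fun z hz => iSup₂_le fun ρ hρ => ?_
  have hAs := le_ApPlusDisc s u hz hρ
  have hRH := le_RHDisc (r / (r - 1)) u hz hρ
  have hA2 := le_ApPlusDisc 2 (fun x => ν x ^ r) hz hρ
  simp only [eAvg_eq_lintegral] at hAs hRH hA2 ⊢
  have hB := discMeasure_ball_ne_zero (Metric.sphere_subset_closedBall hz) hρ
  set μ := (discMeasure (Metric.ball z ρ))⁻¹ • discMeasure.restrict (Metric.ball z ρ)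
  have hμ : μ ≠ 0 := by simp [μ, hB, measure_ne_top]
  have hμd : μ ≪ discMeasure :=
    (Measure.absolutelyContinuous_of_le Measure.restrict_le_self).smul_left _
  obtain ⟨hu_meas, hu_pos⟩ := hu.mono_ac hμd
  obtain ⟨hν_meas, hν_pos⟩ := hν.mono_ac hμd
  set U := ∫⁻ x, ENNReal.ofReal (u x) ∂μ
  set U' := ∫⁻ x, ENNReal.ofReal (u x ^ (-1 / (s - 1))) ∂μ
  have hU0 : U ≠ 0 := lintegral_ofReal_ne_zero hμ hu_meas.aemeasurable hu_pos
  have hU'0 : U' ^ (s - 1) ≠ 0 := by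
    refine (ENNReal.rpow_pos_of_nonneg (pos_iff_ne_zero.mpr ?_) (by linarith)).ne'
    exact lintegral_ofReal_ne_zero hμ (hu_meas.pow_const _).aemeasurable
      (hu_pos.mono fun x hx => Real.rpow_pos_of_pos hx _)
  -- finiteness of `[u]_{A_s⁺}` is what keeps `⨍ u` finite, so that the `RH` quotient can be cleared
  have hUtop : U ≠ ⊤ := fun h =>
    huAs (top_unique (hAs.trans_eq' (by rw [h, ENNReal.top_mul hU'0])))
  have hA2' : (∫⁻ x, ENNReal.ofReal (ν x ^ r) ∂μ) * ∫⁻ x, ENNReal.ofReal (ν x ^ (-r)) ∂μ ≤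
      ApPlusDisc 2 fun x => ν x ^ r := by
    refine le_of_eq_of_le ?_ hA2
    rw [show (2 : ℝ) - 1 = 1 by norm_num, ENNReal.rpow_one, div_one]
    refine congrArg _ (lintegral_congr_ae ?_)
    filter_upwards [hν_pos] with x hx
    rw [← Real.rpow_mul hx.le, mul_neg_one]
  calc _ ≤ _ := lintegral_product_weight_le hs hr hp hu_meas.aemeasurable hν_meas.aemeasurable
        (hu_pos.mono fun _ h => h.le) (hν_pos.mono fun _ h => h.le)
    _ ≤ RHDisc (r / (r - 1)) u * U * U' ^ (s - 1) * (ApPlusDisc 2 fun x => ν x ^ r) ^ (1 / r) := by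
      gcongr
      exact (ENNReal.div_le_iff hU0 hUtop).mp hRH
    _ ≤ _ := by
      rw [mul_assoc _ U, mul_comm (RHDisc _ u)]
      gcongr

/-- Let `1 < p₀ < p < p₀/(p₀-1)`, `r = p₀/(p(p₀-1))`, `s = p/p₀`.
If `u ∈ A_s⁺(𝔻) ∩ RH_{r'}(𝔻)` and `ν^r ∈ A₂⁺(𝔻)`, then `uν ∈ A_p⁺(𝔻)` and
`[uν]_{A_p⁺} ≤ [u]_{A_s⁺} · [u]_{RH_{r'}} · [ν^r]_{A₂⁺}^{1/r}`. -/
theorem product_weight_Ap_disc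
    (p₀ p : ℝ) (h₀ : 1 < p₀) (h₀p : p₀ < p) (hp : p < p₀ / (p₀ - 1))
    (u ν : ℂ → ℝ)
    (hu : IsWeightOn discMeasure u) (hν : IsWeightOn discMeasure ν)
    (huAs : ApPlusDisc (p / p₀) u < ⊤)
    (huRH : RHDisc ((p₀ / (p * (p₀ - 1))) / (p₀ / (p * (p₀ - 1)) - 1)) u < ⊤)
    (hνA2 : ApPlusDisc 2 (fun z => ν z ^ (p₀ / (p * (p₀ - 1)))) < ⊤) :
    ApPlusDisc p (fun z => u z * ν z) < ⊤ ∧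
      ApPlusDisc p (fun z => u z * ν z) ≤
        ApPlusDisc (p / p₀) u *
          RHDisc ((p₀ / (p * (p₀ - 1))) / (p₀ / (p * (p₀ - 1)) - 1)) u *
          (ApPlusDisc 2 (fun z => ν z ^ (p₀ / (p * (p₀ - 1))))) ^
            (1 / (p₀ / (p * (p₀ - 1)))) := by
  have hp₀ : 0 < p₀ - 1 := by linarith
  have hr : 1 < p₀ / (p * (p₀ - 1)) :=
    (one_lt_div (mul_pos (by linarith) hp₀)).mpr ((lt_div_iff₀ hp₀).mp hp)
  have hs : 1 < p / p₀ := (one_lt_div (by linarith)).mpr h₀p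
  have hsr : p / p₀ + 1 / (p₀ / (p * (p₀ - 1))) = p := by
    field_simp
    ring
  have key := ApPlusDisc_product_weight_le hs hr hsr hu hν huAs.ne
  refine ⟨key.trans_lt ?_, key⟩
  exact ENNReal.mul_lt_top (ENNReal.mul_lt_top huAs huRH)
    (ENNReal.rpow_lt_top_of_nonneg (by positivity) hνA2.ne)
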